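/- If x ∈ GL₆(𝕂) has lower right 2×2 corner block equal to zero, then x·x_left does not belong to Lie(P)·x + x·Lie(P)^τ. -/

import Mathlib

open Matrix

/-- The Lie algebra of the parabolic `P ⊆ GL₆(𝕂)`: block upper triangular `6 × 6`
matrices with respect to the partition `(2,2,2)` of `6`. -/
def LieP (𝕂 : Type*) [RCLike 𝕂] : Set (Matrix (Fin 6) (Fin 6) 𝕂) :=
  {p | ∀ i j : Fin 6, (j : ℕ) / 2 < (i : ℕ) / 2 → p i j = 0}

/-- `Lie(P)^τ`, the image of `Lie(P)` under matrix transpose. -/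
def LiePtau (𝕂 : Type*) [RCLike 𝕂] : Set (Matrix (Fin 6) (Fin 6) 𝕂) :=
  {q | qᵀ ∈ LieP 𝕂}

/-- The block matrix `x_left = [[0,I₂,0],[0,0,I₂],[0,0,0]]` (2×2 blocks). -/
def xLeft (𝕂 : Type*) [RCLike 𝕂] : Matrix (Fin 6) (Fin 6) 𝕂 :=
  Matrix.of fun i j => if (j : ℕ) = (i : ℕ) + 2 then 1 else 0

/-- `x_right = x_left^τ`. -/
def xRight (𝕂 : Type*) [RCLike 𝕂] : Matrix (Fin 6) (Fin 6) 𝕂 := (xLeft 𝕂)ᵀ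

/-- The set `Lie(P)·x + x·Lie(P)^τ = {p·x + x·q : p ∈ Lie(P), q ∈ Lie(P)^τ}`. -/
def tanSet {𝕂 : Type*} [RCLike 𝕂] (x : Matrix (Fin 6) (Fin 6) 𝕂) :
    Set (Matrix (Fin 6) (Fin 6) 𝕂) :=
  {m | ∃ p ∈ LieP 𝕂, ∃ q ∈ LiePtau 𝕂, m = p * x + x * q}

/-- The lower right `i × j` corner block of a `6 × 6` matrix. -/
def corner {𝕂 : Type*} [RCLike 𝕂] (i j : ℕ) (hi : i ≤ 6) (hj : j ≤ 6)
    (x : Matrix (Fin 6) (Fin 6) 𝕂) : Matrix (Fin i) (Fin j) 𝕂 :=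
  Matrix.of fun a b =>
    x ⟨6 - i + a.1, by have := a.2; omega⟩ ⟨6 - j + b.1, by have := b.2; omega⟩

/-- The rank matrix `R(x) = [[r₄ₓ₄(x), r₄ₓ₂(x)], [r₂ₓ₄(x), r₂ₓ₂(x)]]`, where
`r_{i×j}(x)` is the rank of the lower right `i × j` corner block of `x`. -/
noncomputable def rankMatrix {𝕂 : Type*} [RCLike 𝕂] (x : Matrix (Fin 6) (Fin 6) 𝕂) :
    Matrix (Fin 2) (Fin 2) ℕ :=
  !![(corner 4 4 (by norm_num) (by norm_num) x).rank,
     (corner 4 2 (by norm_num) (by norm_num) x).rank;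
     (corner 2 4 (by norm_num) (by norm_num) x).rank,
     (corner 2 2 (by norm_num) (by norm_num) x).rank]

/-!
Compare the bottom block row (rows `4, 5`) of both sides of `x·x_left = p·x + x·q`. Right
multiplication by `x_left` shifts block columns one step to the right. In the bottom rows, block
column `b + 1` of `p·x` only involves the bottom rows of `x` (`p` is block upper triangular), and
that of `x·q` only block columns `≥ b + 1` of the bottom rows of `x` (`q` is block lower
triangular). So if the bottom rows of `x` vanish from block column `b + 1` on, they vanish from
block column `b` on. Starting from the zero corner, two steps kill rows `4, 5`, so `det x = 0`.
-/

section

variable {𝕂 : Type*} [RCLike 𝕂]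

lemma mul_apply_eq_zero_of_mem_LieP {p y : Matrix (Fin 6) (Fin 6) 𝕂} (hp : p ∈ LieP 𝕂)
    {i k : Fin 6} (hy : ∀ l : Fin 6, (i : ℕ) / 2 ≤ (l : ℕ) / 2 → y l k = 0) : (p * y) i k = 0 := by
  rw [mul_apply]
  refine Finset.sum_eq_zero fun l _ => ?_
  rcases lt_or_ge ((l : ℕ) / 2) ((i : ℕ) / 2) with h | h
  · rw [hp i l h, zero_mul]
  · rw [hy l h, mul_zero]

lemma mul_apply_eq_zero_of_mem_LiePtau {q y : Matrix (Fin 6) (Fin 6) 𝕂} (hq : q ∈ LiePtau 𝕂)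
    {i k : Fin 6} (hy : ∀ l : Fin 6, (k : ℕ) / 2 ≤ (l : ℕ) / 2 → y i l = 0) :
    (y * q) i k = 0 := by
  rw [mul_apply]
  refine Finset.sum_eq_zero fun l _ => ?_
  rcases lt_or_ge ((l : ℕ) / 2) ((k : ℕ) / 2) with h | h
  · rw [show q l k = 0 from hq k l h, mul_zero]
  · rw [hy l h, zero_mul]

lemma mul_xLeft_apply_of_eq_add_two (y : Matrix (Fin 6) (Fin 6) 𝕂) (i : Fin 6) {j k : Fin 6}
    (hjk : (k : ℕ) = j + 2) : (y * xLeft 𝕂) i k = y i j := by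
  rw [mul_apply, Finset.sum_eq_single j]
  · simp [xLeft, hjk]
  · intro l _ hlj
    simp [xLeft, hjk, Fin.val_ne_of_ne hlj.symm]
  · simp

def BottomRowsVanishFrom (x : Matrix (Fin 6) (Fin 6) 𝕂) (b : ℕ) : Prop :=
  ∀ i j : Fin 6, 4 ≤ (i : ℕ) → b ≤ (j : ℕ) / 2 → x i j = 0

lemma BottomRowsVanishFrom.of_succ {x p q : Matrix (Fin 6) (Fin 6) 𝕂}
    (hpq : x * xLeft 𝕂 = p * x + x * q) (hp : p ∈ LieP 𝕂) (hq : q ∈ LiePtau 𝕂) {b : ℕ}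
    (hb : b < 2) (h : BottomRowsVanishFrom x (b + 1)) : BottomRowsVanishFrom x b := by
  intro i j hi hj
  by_cases hj' : b + 1 ≤ (j : ℕ) / 2
  · exact h i j hi hj'
  set k : Fin 6 := ⟨j + 2, by omega⟩
  have hk : (k : ℕ) / 2 = b + 1 := by simp only [k]; omega
  have hpx : (p * x) i k = 0 :=
    mul_apply_eq_zero_of_mem_LieP hp fun l hl => h l k (by omega) hk.ge
  have hxq : (x * q) i k = 0 :=
    mul_apply_eq_zero_of_mem_LiePtau hq fun l hl => h i l hi (hk ▸ hl)
  rw [← mul_xLeft_apply_of_eq_add_two x i (rfl : (k : ℕ) = j + 2), hpq, Matrix.add_apply,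
    hpx, hxq, add_zero]

end

theorem xLeft_transversal_of_corner_zero {𝕂 : Type*} [RCLike 𝕂]
    (x : Matrix (Fin 6) (Fin 6) 𝕂) (hx : IsUnit x.det)
    (hzero : ∀ i j : Fin 6, 4 ≤ (i : ℕ) → 4 ≤ (j : ℕ) → x i j = 0) :
    x * xLeft 𝕂 ∉ tanSet x := by
  rintro ⟨p, hp, q, hq, hpq⟩
  have h2 : BottomRowsVanishFrom x 2 := fun i j hi hj => hzero i j hi (by omega)
  have h0 : BottomRowsVanishFrom x 0 :=
    (h2.of_succ hpq hp hq (b := 1) one_lt_two).of_succ hpq hp hq two_pos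
  exact hx.ne_zero (det_eq_zero_of_row_eq_zero 4 fun j => h0 4 j le_rfl (Nat.zero_le _))
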